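/- arXiv:1105.4735 — 6 statements merged into one kernel-verified Lean document; each statement's English description precedes it below -/
import Mathlib

section
/- For any formal power series h(z) = z + Σ_{n≥m} hₙ zⁿ with m ≥ 2 and h_m ≠ 0 over a field of characteristic 0, and any scalar t, there exists a unique formal power series F(z) = z + Σ_{n≥m} Fₙ zⁿ with F_m = t·h_m and F ∘ h = h ∘ F. -/
open PowerSeries

/-- Composition `g ∘ f` of formal power series (intended for `f` with zero constant term):
the `n`-th coefficient is `∑_{k ≤ n} g_k · (f^k)_n`. -/
noncomputable def PowerSeries.comp' {K : Type*} [CommRing K]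
    (g f : PowerSeries K) : PowerSeries K :=
  PowerSeries.mk fun n => ∑ k ∈ Finset.range (n + 1), (coeff k g) * coeff n (f ^ k)

/-!
Write `f = X + O(X^m)` as `X ^ m ∣ f - X` and let `D f = f ∘ h - h ∘ f`. If `f ≡ g mod X^n`
with `n ≥ m`, then `D f ≡ D g + (n - m) h_m (f_n - g_n) X^(n+m-1) mod X^(n+m)`: for series
tangent to the identity `f^k - g^k ≡ k X^(k-1) (f - g) mod X^(n+k)`, so in `f ∘ h - g ∘ h`
only the term `k = n` and in `h ∘ f - h ∘ g` only the terms `k = 1, m` contribute.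
Comparing with `g = X`, for which `D X = 0`, shows that `D F` vanishes below `X^(2m)`.
For `n > m` the factor `(n - m) h_m` is invertible, so the coefficient `n + m - 1` of
`D F = 0` determines `F_n` from `F_0, …, F_(n-1)`: this gives uniqueness, and solving for
`F_n` recursively gives existence.
-/

open Finset

section PowDvd

variable {A : Type*} [CommRing A] {a x y : A} {n : ℕ}

theorem pow_add_pred_dvd_pow_sub_pow (hx : a ∣ x) (hy : a ∣ y) (hxy : a ^ n ∣ x - y)
    (k : ℕ) :
    a ^ (n + (k - 1)) ∣ x ^ k - y ^ k := by
  rw [← geom_sum₂_mul, pow_add, mul_comm (a ^ n)]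
  refine mul_dvd_mul (dvd_sum fun i hi => ?_) hxy
  obtain ⟨j, rfl⟩ : ∃ j, k = i + j + 1 := ⟨k - 1 - i, by grind⟩
  rw [show i + j + 1 - 1 - i = j by omega, show i + j + 1 - 1 = i + j by omega, pow_add]
  exact mul_dvd_mul (pow_dvd_pow_of_dvd hx i) (pow_dvd_pow_of_dvd hy _)

theorem dvd_of_sq_dvd_sub_self (hx : a ^ 2 ∣ x - a) : a ∣ x := by
  simpa using dvd_add ((dvd_pow_self a two_ne_zero).trans hx) (dvd_refl a)

theorem pow_succ_dvd_pow_mul_pow_sub_pow (hx : a ^ 2 ∣ x - a) (hy : a ^ 2 ∣ y - a) (i j : ℕ) :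
    a ^ (i + j + 1) ∣ x ^ i * y ^ j - a ^ (i + j) := by
  have hxi : a ^ (i + 1) ∣ x ^ i - a ^ i :=
    (pow_dvd_pow a (by omega)).trans
      (pow_add_pred_dvd_pow_sub_pow (dvd_of_sq_dvd_sub_self hx) (dvd_refl a) hx i)
  have hyj : a ^ (j + 1) ∣ y ^ j - a ^ j :=
    (pow_dvd_pow a (by omega)).trans
      (pow_add_pred_dvd_pow_sub_pow (dvd_of_sq_dvd_sub_self hy) (dvd_refl a) hy j)
  have hsplit : x ^ i * y ^ j - a ^ (i + j) = (x ^ i - a ^ i) * y ^ j + a ^ i * (y ^ j - a ^ j) := by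
    ring
  rw [hsplit]
  refine dvd_add ?_ ?_
  · rw [show i + j + 1 = (i + 1) + j by omega, pow_add]
    exact mul_dvd_mul hxi (pow_dvd_pow_of_dvd (dvd_of_sq_dvd_sub_self hy) j)
  · rw [show i + j + 1 = i + (j + 1) by omega, pow_add]
    exact mul_dvd_mul_left _ hyj

theorem pow_add_dvd_pow_sub_pow_sub_mul (hx : a ^ 2 ∣ x - a) (hy : a ^ 2 ∣ y - a)
    (hxy : a ^ n ∣ x - y) (k : ℕ) :
    a ^ (n + k) ∣ x ^ k - y ^ k - k * a ^ (k - 1) * (x - y) := by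
  have hgeom : x ^ k - y ^ k - k * a ^ (k - 1) * (x - y) =
      (∑ i ∈ range k, (x ^ i * y ^ (k - 1 - i) - a ^ (k - 1))) * (x - y) := by
    rw [sum_sub_distrib, sum_const, card_range, nsmul_eq_mul, sub_mul, geom_sum₂_mul]
  rw [hgeom, pow_add, mul_comm (a ^ n)]
  refine mul_dvd_mul (dvd_sum fun i hi => ?_) hxy
  obtain ⟨j, rfl⟩ : ∃ j, k = i + j + 1 := ⟨k - 1 - i, by grind⟩
  rw [show i + j + 1 - 1 - i = j by omega, show i + j + 1 - 1 = i + j by omega]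
  exact pow_succ_dvd_pow_mul_pow_sub_pow hx hy i _

end PowDvd

namespace PowerSeries

section

variable {R : Type*} [CommRing R] {f g h d : R⟦X⟧} {m n N : ℕ}

theorem coeff_eq_of_X_pow_dvd_sub (hfg : X ^ n ∣ f - g) (hN : N < n) : coeff N f = coeff N g :=
  sub_eq_zero.1 (by simpa using X_pow_dvd_iff.1 hfg N hN)

theorem X_pow_dvd_sub_X_iff (hm : 2 ≤ m) :
    X ^ m ∣ f - X ↔
      coeff 0 f = 0 ∧ coeff 1 f = 1 ∧ ∀ n, 1 < n → n < m → coeff n f = 0 := by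
  simp only [X_pow_dvd_iff, map_sub, coeff_X, sub_eq_zero]
  constructor
  · intro H
    exact ⟨by simpa using H 0 (by omega), by simpa using H 1 (by omega),
      fun n h1 h2 => by simpa [h1.ne'] using H n h2⟩
  · rintro ⟨h0, h1, hmid⟩ (_ | _ | j) hj
    · simpa using h0
    · simpa using h1
    · simpa using hmid (j + 2) (by omega) hj

theorem X_dvd_of_X_pow_dvd_sub_X (hm : 2 ≤ m) (hf : X ^ m ∣ f - X) : X ∣ f :=
  dvd_of_sq_dvd_sub_self ((pow_dvd_pow X hm).trans hf)

theorem coeff_pow_eq_of_X_pow_dvd_sub (hf : X ∣ f) (hg : X ∣ g) (hfg : X ^ n ∣ f - g)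
    {k : ℕ} (hN : N + 1 < n + k) : coeff N (f ^ k) = coeff N (g ^ k) :=
  coeff_eq_of_X_pow_dvd_sub (pow_add_pred_dvd_pow_sub_pow hf hg hfg k) (by omega)

theorem coeff_pow_sub_coeff_pow_of_X_pow_dvd_sub (hf : X ^ 2 ∣ f - X) (hg : X ^ 2 ∣ g - X)
    (hn : 0 < n) (hfg : X ^ n ∣ f - g) (k : ℕ) :
    coeff (n + k - 1) (f ^ k) - coeff (n + k - 1) (g ^ k) = k * (coeff n f - coeff n g) := by
  rcases k with _ | k
  · simp
  have H := X_pow_dvd_iff.1 (pow_add_dvd_pow_sub_pow_sub_mul hf hg hfg (k + 1)) (n + k) (by omega)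
  rw [← map_natCast C, mul_assoc, map_sub, map_sub, coeff_C_mul, coeff_X_pow_mul',
    if_pos (by omega), show n + k - (k + 1 - 1) = n by omega, map_sub, sub_eq_zero] at H
  simpa using H

theorem coeff_pow_of_X_pow_dvd_sub_X (hm : 2 ≤ m) (hf : X ^ m ∣ f - X) {k : ℕ}
    (hN : N + 1 < k + m) : coeff N (f ^ k) = if N = k then 1 else 0 := by
  rw [coeff_pow_eq_of_X_pow_dvd_sub (X_dvd_of_X_pow_dvd_sub_X hm hf) (dvd_refl X) hf (by omega),
    coeff_X_pow]

theorem coeff_pow_add_sub_one (hm : 2 ≤ m) (hf : X ^ m ∣ f - X) (k : ℕ) :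
    coeff (m + k - 1) (f ^ k) = k * coeff m f := by
  have H := coeff_pow_sub_coeff_pow_of_X_pow_dvd_sub ((pow_dvd_pow X hm).trans hf)
    (by simp) (by omega) hf k
  rwa [coeff_X_pow, if_neg (by omega), coeff_X, if_neg (by omega), sub_zero, sub_zero] at H

theorem coeff_comp'_eq_sum (hf : X ∣ f) {M : ℕ} (hN : N < M) (g : R⟦X⟧) :
    coeff N (g.comp' f) = ∑ k ∈ range M, coeff k g * coeff N (f ^ k) := by
  rw [comp', coeff_mk]
  refine sum_subset (range_subset_range.2 hN) fun k _ hk => ?_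
  rw [X_pow_dvd_iff.1 (pow_dvd_pow_of_dvd hf k) N (by simpa using hk), mul_zero]

theorem X_comp' (hf : X ∣ f) : (X : R⟦X⟧).comp' f = f := by
  ext N
  rw [coeff_comp'_eq_sum hf (by omega : N < N + 2)]
  simp [coeff_X]

theorem comp'_X (g : R⟦X⟧) : g.comp' X = g := by
  ext N
  simp [comp', coeff_X_pow]

theorem X_pow_add_dvd_comp'_sub (hm : 2 ≤ m) (hh : X ^ m ∣ h - X) (hd : X ^ n ∣ d) :
    X ^ (n + m) ∣ d.comp' h - d - C (n * coeff m h * coeff n d) * X ^ (n + m - 1) := by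
  have hd' := X_pow_dvd_iff.1 hd
  rw [X_pow_dvd_iff]
  intro N hN
  rw [map_sub, map_sub, coeff_C_mul_X_pow, coeff_comp'_eq_sum (X_dvd_of_X_pow_dvd_sub_X hm hh) hN,
    sub_sub, sub_eq_zero]
  split_ifs with hNtop
  · subst hNtop
    rw [← sum_subset (s₁ := {n, n + m - 1}) (by intro k; simp; omega), sum_pair (by omega),
      coeff_pow_of_X_pow_dvd_sub_X hm hh (k := n + m - 1) (by omega), if_pos rfl, add_comm n m,
      coeff_pow_add_sub_one hm hh]
    · ring
    intro k hk hk'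
    simp only [mem_range, mem_insert, mem_singleton, not_or] at hk hk'
    rcases lt_or_ge k n with hkn | hkn
    · rw [hd' k hkn, zero_mul]
    · rw [coeff_pow_of_X_pow_dvd_sub_X hm hh (by omega), if_neg (by omega), mul_zero]
  · rw [sum_eq_single N, coeff_pow_of_X_pow_dvd_sub_X hm hh (by omega), if_pos rfl]
    · ring
    · intro k _ hkN
      rcases lt_or_ge k n with hkn | hkn
      · rw [hd' k hkn, zero_mul]
      · rw [coeff_pow_of_X_pow_dvd_sub_X hm hh (by omega), if_neg (Ne.symm hkN), mul_zero]
    · simp; omega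

theorem X_pow_add_dvd_comp'_sub_comp' (hm : 2 ≤ m) (hmn : m ≤ n) (hh : X ^ m ∣ h - X)
    (hf : X ^ m ∣ f - X) (hfg : X ^ n ∣ f - g) :
    X ^ (n + m) ∣ h.comp' f - h.comp' g - (f - g) -
      C (m * coeff m h * (coeff n f - coeff n g)) * X ^ (n + m - 1) := by
  have hg : X ^ m ∣ g - X := by
    simpa using dvd_sub hf ((pow_dvd_pow X hmn).trans hfg)
  have hf2 := (pow_dvd_pow X hm).trans hf
  have hg2 := (pow_dvd_pow X hm).trans hg
  obtain ⟨h0, h1, hmid⟩ := (X_pow_dvd_sub_X_iff hm).1 hh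
  rw [X_pow_dvd_iff]
  intro N hN
  rw [map_sub, map_sub, map_sub, map_sub, coeff_C_mul_X_pow,
    coeff_comp'_eq_sum (X_dvd_of_X_pow_dvd_sub_X hm hf) hN,
    coeff_comp'_eq_sum (X_dvd_of_X_pow_dvd_sub_X hm hg) hN, ← sum_sub_distrib,
    ← sum_subset (s₁ := {1, m}) (by intro k; simp; omega), sum_pair (by omega), h1, pow_one,
    pow_one, ← mul_sub, ← mul_sub]
  · split_ifs with hNtop
    · subst hNtop
      rw [coeff_pow_sub_coeff_pow_of_X_pow_dvd_sub hf2 hg2 (by omega) hfg m]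
      ring
    · rw [coeff_pow_eq_of_X_pow_dvd_sub (X_dvd_of_X_pow_dvd_sub_X hm hf)
        (X_dvd_of_X_pow_dvd_sub_X hm hg) hfg (by omega)]
      ring
  intro k hk hk'
  simp only [mem_range, mem_insert, mem_singleton, not_or] at hk hk'
  rcases lt_trichotomy k m with hkm | hkm | hkm
  · rcases Nat.lt_or_ge k 1 with hk0 | hk1
    · rw [Nat.lt_one_iff.1 hk0, h0, zero_mul, zero_mul, sub_zero]
    · rw [hmid k (by omega) hkm, zero_mul, zero_mul, sub_zero]
  · exact absurd hkm hk'.2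
  · rw [coeff_pow_eq_of_X_pow_dvd_sub (X_dvd_of_X_pow_dvd_sub_X hm hf)
      (X_dvd_of_X_pow_dvd_sub_X hm hg) hfg (by omega), sub_self]

theorem sub_comp' (f g h : R⟦X⟧) : (f - g).comp' h = f.comp' h - g.comp' h := by
  ext N
  simp [comp', sub_mul, sum_sub_distrib]

noncomputable def commDefect (h f : R⟦X⟧) : R⟦X⟧ := f.comp' h - h.comp' f

theorem X_pow_add_dvd_commDefect_sub (hm : 2 ≤ m) (hmn : m ≤ n) (hh : X ^ m ∣ h - X)
    (hf : X ^ m ∣ f - X) (hfg : X ^ n ∣ f - g) :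
    X ^ (n + m) ∣ commDefect h f - commDefect h g -
      C ((n - m) * coeff m h * (coeff n f - coeff n g)) * X ^ (n + m - 1) := by
  convert dvd_sub (X_pow_add_dvd_comp'_sub hm hh hfg)
    (X_pow_add_dvd_comp'_sub_comp' hm hmn hh hf hfg) using 1
  simp only [commDefect, sub_comp', map_sub, map_mul]
  ring

theorem coeff_commDefect_sub_coeff_commDefect (hm : 2 ≤ m) (hmn : m ≤ n) (hh : X ^ m ∣ h - X)
    (hf : X ^ m ∣ f - X) (hfg : X ^ n ∣ f - g) :
    coeff (n + m - 1) (commDefect h f) - coeff (n + m - 1) (commDefect h g) =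
      (n - m) * coeff m h * (coeff n f - coeff n g) := by
  have H := X_pow_dvd_iff.1 (X_pow_add_dvd_commDefect_sub hm hmn hh hf hfg) (n + m - 1) (by omega)
  rwa [map_sub, coeff_C_mul_X_pow, if_pos rfl, sub_eq_zero, map_sub] at H

theorem commDefect_X (hh : X ∣ h) : commDefect h X = 0 := by
  rw [commDefect, X_comp' hh, comp'_X, sub_self]

theorem X_pow_two_mul_dvd_commDefect (hm : 2 ≤ m) (hh : X ^ m ∣ h - X) (hf : X ^ m ∣ f - X) :
    X ^ (2 * m) ∣ commDefect h f := by
  simpa [two_mul, commDefect_X (X_dvd_of_X_pow_dvd_sub_X hm hh)] using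
    X_pow_add_dvd_commDefect_sub hm le_rfl hh hf hf

theorem eq_of_commDefect_eq_zero [IsDomain R] [CharZero R] (hm : 2 ≤ m) (hh : X ^ m ∣ h - X)
    (hhm : coeff m h ≠ 0) (hf : X ^ m ∣ f - X) (hg : X ^ m ∣ g - X)
    (hfg : coeff m f = coeff m g) (hDf : commDefect h f = 0) (hDg : commDefect h g = 0) :
    f = g := by
  ext N
  induction N using Nat.strong_induction_on with
  | _ N ih =>
  rcases lt_trichotomy N m with hNm | rfl | hNm
  · exact (coeff_eq_of_X_pow_dvd_sub hf hNm).trans (coeff_eq_of_X_pow_dvd_sub hg hNm).symm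
  · exact hfg
  · have hfgN : X ^ N ∣ f - g := X_pow_dvd_iff.2 fun j hj => by rw [map_sub, ih j hj, sub_self]
    have H := coeff_commDefect_sub_coeff_commDefect hm hNm.le hh hf hfgN
    rw [hDf, hDg, map_zero, sub_zero, eq_comm, mul_eq_zero, mul_eq_zero, sub_eq_zero,
      sub_eq_zero, Nat.cast_inj] at H
    exact H.resolve_left (not_or.2 ⟨hNm.ne', hhm⟩)

end

section

variable {K : Type*} [Field K] {m n : ℕ} {h : K⟦X⟧} {t : K}

noncomputable def regularIterateCoeff (m : ℕ) (h : K⟦X⟧) (t : K) (n : ℕ) : K :=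
  if n < m then coeff n X
  else if n = m then t * coeff m h
  else -coeff (n + m - 1)
      (commDefect h (mk fun j => if j < n then regularIterateCoeff m h t j else 0)) /
    ((n - m) * coeff m h)

noncomputable def regularIterate (m : ℕ) (h : K⟦X⟧) (t : K) : K⟦X⟧ :=
  mk (regularIterateCoeff m h t)

theorem coeff_regularIterate_of_lt (hn : n < m) :
    coeff n (regularIterate m h t) = coeff n X := by
  rw [regularIterate, coeff_mk, regularIterateCoeff, if_pos hn]

theorem coeff_regularIterate_self : coeff m (regularIterate m h t) = t * coeff m h := by
  rw [regularIterate, coeff_mk, regularIterateCoeff, if_neg (lt_irrefl m), if_pos rfl]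

theorem coeff_regularIterate_of_gt (hmn : m < n) :
    coeff n (regularIterate m h t) =
      -coeff (n + m - 1) (commDefect h (trunc n (regularIterate m h t))) /
        ((n - m) * coeff m h) := by
  have htrunc : (mk fun j => if j < n then regularIterateCoeff m h t j else 0) =
      (trunc n (regularIterate m h t) : K⟦X⟧) := by
    ext j
    simp [coeff_trunc, regularIterate]
  rw [regularIterate, coeff_mk, regularIterateCoeff, if_neg (by omega), if_neg hmn.ne', htrunc]
  rfl

theorem X_pow_dvd_regularIterate_sub_X : X ^ m ∣ regularIterate m h t - X :=
  X_pow_dvd_iff.2 fun _ hj => by rw [map_sub, coeff_regularIterate_of_lt hj, sub_self]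

theorem commDefect_regularIterate [CharZero K] (hm : 2 ≤ m) (hh : X ^ m ∣ h - X)
    (hhm : coeff m h ≠ 0) : commDefect h (regularIterate m h t) = 0 := by
  set F := regularIterate m h t
  ext N
  rw [map_zero]
  by_cases hN : N < 2 * m
  · exact X_pow_dvd_iff.1 (X_pow_two_mul_dvd_commDefect hm hh X_pow_dvd_regularIterate_sub_X) N hN
  obtain ⟨n, hmn, rfl⟩ : ∃ n, m < n ∧ N = n + m - 1 := ⟨N - m + 1, by omega, by omega⟩
  have hFT : X ^ n ∣ F - (trunc n F : K⟦X⟧) :=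
    ⟨_, sub_eq_iff_eq_add.2 (eq_X_pow_mul_shift_add_trunc n F)⟩
  have hc : ((n : K) - m) * coeff m h ≠ 0 :=
    mul_ne_zero (sub_ne_zero.2 (Nat.cast_injective.ne hmn.ne')) hhm
  have H := coeff_commDefect_sub_coeff_commDefect hm hmn.le hh X_pow_dvd_regularIterate_sub_X hFT
  rw [Polynomial.coeff_coe, coeff_trunc, if_neg (lt_irrefl n), sub_zero,
    coeff_regularIterate_of_gt hmn, mul_div_cancel₀ _ hc] at H
  linear_combination H

end

end PowerSeries

/-- For any formal power series `h z = z + ∑_{n ≥ m} hₙ zⁿ` with `m ≥ 2` and `h_m ≠ 0`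
over a field of characteristic zero, and any scalar `t`, there exists a unique formal power
series `F z = z + ∑_{n ≥ m} Fₙ zⁿ` with `F_m = t · h_m` and `F ∘ h = h ∘ F`. -/
theorem regular_iterate_exists_unique {K : Type*} [Field K] [CharZero K]
    (m : ℕ) (hm : 2 ≤ m) (h : PowerSeries K)
    (h0 : coeff 0 h = 0) (h1 : coeff 1 h = 1)
    (hmid : ∀ n, 1 < n → n < m → coeff n h = 0)
    (hmne : coeff m h ≠ 0) (t : K) :
    ∃! F : PowerSeries K,
      coeff 0 F = 0 ∧ coeff 1 F = 1 ∧
      (∀ n, 1 < n → n < m → coeff n F = 0) ∧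
      coeff m F = t * coeff m h ∧
      PowerSeries.comp' F h = PowerSeries.comp' h F := by
  have hh : X ^ m ∣ h - X := (X_pow_dvd_sub_X_iff hm).2 ⟨h0, h1, hmid⟩
  have hF : X ^ m ∣ regularIterate m h t - X := X_pow_dvd_regularIterate_sub_X
  obtain ⟨hF0, hF1, hFmid⟩ := (X_pow_dvd_sub_X_iff hm).1 hF
  refine ⟨regularIterate m h t, ⟨hF0, hF1, hFmid, coeff_regularIterate_self,
    sub_eq_zero.1 (commDefect_regularIterate hm hh hmne)⟩, ?_⟩
  rintro G ⟨hG0, hG1, hGmid, hGm, hGcomm⟩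
  exact eq_of_commDefect_eq_zero hm hh hmne ((X_pow_dvd_sub_X_iff hm).2 ⟨hG0, hG1, hGmid⟩) hF
    (hGm.trans coeff_regularIterate_self.symm) (sub_eq_zero.2 hGcomm)
    (commDefect_regularIterate hm hh hmne)
end

section
/- The regular iterates satisfy h^{[1]} = h and h^{[s+t]} = h^{[s]} ∘ h^{[t]} for all s, t. -/
open PowerSeries

/-- `F` is the regular `t`-th iterate of `h` (where `h z = z + ∑_{n ≥ m} hₙ zⁿ`, `h_m ≠ 0`):
`F z = z + ∑_{n ≥ m} Fₙ zⁿ` with `F_m = t · h_m` and `F ∘ h = h ∘ F`. -/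
def IsRegularIterate {K : Type*} [Field K] (m : ℕ) (h : PowerSeries K)
    (t : K) (F : PowerSeries K) : Prop :=
  coeff 0 F = 0 ∧ coeff 1 F = 1 ∧
  (∀ n, 1 < n → n < m → coeff n F = 0) ∧
  coeff m F = t * coeff m h ∧
  PowerSeries.comp' F h = PowerSeries.comp' h F

namespace PowerSeries

open Finset

variable {R : Type*} [CommRing R]

theorem coeff_pow_of_lt {f : R⟦X⟧} (hf : constantCoeff f = 0) {n k : ℕ} (hnk : n < k) :
    coeff n (f ^ k) = 0 :=
  coeff_of_lt_order n <|
    (Nat.cast_lt.mpr hnk).trans_le (le_order_pow_of_constantCoeff_eq_zero k hf)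

theorem coeff_pow_self {f : R⟦X⟧} (hf : constantCoeff f = 0) (n : ℕ) :
    coeff n (f ^ n) = coeff 1 f ^ n := by
  obtain ⟨u, rfl⟩ := X_dvd_iff.mpr hf
  have hu : coeff 1 (X * u) = constantCoeff u := by
    rw [coeff_succ_X_mul, coeff_zero_eq_constantCoeff_apply]
  rw [hu, mul_pow, coeff_X_pow_mul', if_pos le_rfl, Nat.sub_self,
    coeff_zero_eq_constantCoeff_apply, map_pow]

theorem coeff_comp' (g f : R⟦X⟧) (n : ℕ) :
    coeff n (g.comp' f) = ∑ k ∈ range (n + 1), coeff k g * coeff n (f ^ k) :=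
  coeff_mk _ _

theorem comp'_eq_subst (g : R⟦X⟧) {f : R⟦X⟧} (hf : constantCoeff f = 0) :
    g.comp' f = g.subst f := by
  ext n
  rw [coeff_comp', coeff_subst' (HasSubst.of_constantCoeff_zero' hf)]
  refine (finsum_eq_sum_of_support_subset _ fun k hk => ?_).symm
  by_contra hkn
  exact hk (by simp only [coeff_pow_of_lt hf (by simpa using hkn), mul_zero])

theorem constantCoeff_comp' {g : R⟦X⟧} (hg : constantCoeff g = 0) (f : R⟦X⟧) :
    constantCoeff (g.comp' f) = 0 := by
  rw [← coeff_zero_eq_constantCoeff_apply, coeff_comp', sum_range_one,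
    coeff_zero_eq_constantCoeff_apply, hg, zero_mul]

theorem comp'_assoc (a : R⟦X⟧) {b c : R⟦X⟧} (hb : constantCoeff b = 0)
    (hc : constantCoeff c = 0) : (a.comp' b).comp' c = a.comp' (b.comp' c) := by
  have hbc : constantCoeff (b.comp' c) = 0 := constantCoeff_comp' hb c
  rw [comp'_eq_subst _ hb, comp'_eq_subst _ hc, comp'_eq_subst _ hbc, comp'_eq_subst _ hc,
    subst_comp_subst_apply (HasSubst.of_constantCoeff_zero' hb)
      (HasSubst.of_constantCoeff_zero' hc)]

theorem coeff_one_comp' (g f : R⟦X⟧) : coeff 1 (g.comp' f) = coeff 1 g * coeff 1 f := by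
  rw [coeff_comp', sum_range_succ, sum_range_one, pow_zero, coeff_one, if_neg one_ne_zero,
    mul_zero, zero_add, pow_one]

theorem coeff_comp'_eq_add {m : ℕ} {g f : R⟦X⟧} (hg1 : coeff 1 g = 1)
    (hg : ∀ k, 1 < k → k < m → coeff k g = 0) (hf0 : constantCoeff f = 0) (hf1 : coeff 1 f = 1)
    {n : ℕ} (hn : 1 < n) (hnm : n ≤ m) : coeff n (g.comp' f) = coeff n g + coeff n f := by
  rw [coeff_comp', sum_range_succ, coeff_pow_self hf0, hf1, one_pow, mul_one, add_comm]
  congr 1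
  rw [sum_eq_single 1]
  · rw [hg1, pow_one, one_mul]
  · intro k hk hk1
    rcases k with _ | _ | k
    · rw [pow_zero, coeff_one, if_neg (by omega), mul_zero]
    · exact absurd rfl hk1
    · rw [hg (k + 2) (by omega) (by simp only [mem_range] at hk; omega), zero_mul]
  · exact fun h1 => absurd (mem_range.mpr hn) h1

theorem comp'_comm_of_comm {h f g : R⟦X⟧} (h0 : constantCoeff h = 0) (f0 : constantCoeff f = 0)
    (g0 : constantCoeff g = 0) (hf : f.comp' h = h.comp' f) (hg : g.comp' h = h.comp' g) :
    (f.comp' g).comp' h = h.comp' (f.comp' g) :=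
  calc (f.comp' g).comp' h = f.comp' (g.comp' h) := comp'_assoc f g0 h0
    _ = (f.comp' h).comp' g := by rw [hg, comp'_assoc f h0 g0]
    _ = h.comp' (f.comp' g) := by rw [hf, comp'_assoc h f0 g0]

end PowerSeries

theorem regular_iterate_one_and_add_general {K : Type*} [Field K]
    (m : ℕ) (hm : 2 ≤ m) (h : PowerSeries K)
    (h0 : coeff 0 h = 0) (h1 : coeff 1 h = 1)
    (hmid : ∀ n, 1 < n → n < m → coeff n h = 0) :
    IsRegularIterate m h 1 h ∧
    ∀ (s t : K) (F G : PowerSeries K),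
      IsRegularIterate m h s F → IsRegularIterate m h t G →
      IsRegularIterate m h (s + t) (PowerSeries.comp' F G) := by
  refine ⟨⟨h0, h1, hmid, (one_mul _).symm, rfl⟩, ?_⟩
  rintro s t F G ⟨F0, F1, Fmid, Fm, Fcomm⟩ ⟨G0, G1, Gmid, Gm, Gcomm⟩
  rw [coeff_zero_eq_constantCoeff_apply] at h0 F0 G0
  refine ⟨(coeff_zero_eq_constantCoeff_apply _).trans (constantCoeff_comp' F0 G), ?_,
    fun n hn hnm => ?_, ?_, comp'_comm_of_comm h0 F0 G0 Fcomm Gcomm⟩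
  · rw [coeff_one_comp', F1, G1, one_mul]
  · rw [coeff_comp'_eq_add F1 Fmid G0 G1 hn hnm.le, Fmid n hn hnm, Gmid n hn hnm, add_zero]
  · rw [coeff_comp'_eq_add F1 Fmid G0 G1 hm le_rfl, Fm, Gm, add_mul]

/-- The regular iterates satisfy `h^[1] = h` and `h^[s+t] = h^[s] ∘ h^[t]`:
`h` itself is the regular 1-st iterate, and the composition of the regular `s`-th and
`t`-th iterates is the regular `(s+t)`-th iterate. -/
theorem regular_iterate_one_and_add {K : Type*} [Field K] [CharZero K]
    (m : ℕ) (hm : 2 ≤ m) (h : PowerSeries K)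
    (h0 : coeff 0 h = 0) (h1 : coeff 1 h = 1)
    (hmid : ∀ n, 1 < n → n < m → coeff n h = 0)
    (hmne : coeff m h ≠ 0) :
    IsRegularIterate m h 1 h ∧
    ∀ (s t : K) (F G : PowerSeries K),
      IsRegularIterate m h s F → IsRegularIterate m h t G →
      IsRegularIterate m h (s + t) (PowerSeries.comp' F G) :=
  regular_iterate_one_and_add_general m hm h h0 h1 hmid
end

section
/- Let h be analytic at 0 with h(x) = x + h_m x^m + O(x^{m+1}), h_m < 0, m ≥ 2. Then for x > 0 sufficiently small, the iterates h^{[n]}(x) satisfy lim_{n→∞} n^{1/(m−1)} · h^{[n]}(x) = (−h_m(m−1))^{−1/(m−1)}. -/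
/-
Write `u n = h^[n] x` and `k = m - 1`. Near `0` we have `h y = y + c y^m (1 + o(1))` with `c < 0`,
so the orbit of a small `x > 0` decreases to `0`. The change of variable `y ↦ y^{-k}` turns `h`
into an almost-translation: `u (n+1)^{-k} - u n^{-k} → -c k`. By Stolz–Cesàro
`u n^{-k} / n → -c k`, and taking the `(-1/k)`-th power gives the limit.
-/

open Filter Topology

open Asymptotics Set

theorem tendsto_div_natCast_of_tendsto_sub {v : ℕ → ℝ} {A : ℝ}
    (h : Tendsto (fun n => v (n + 1) - v n) atTop (𝓝 A)) :
    Tendsto (fun n : ℕ => v n / n) atTop (𝓝 A) := by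
  have hmean : Tendsto (fun n : ℕ => (n : ℝ)⁻¹ * (v n - v 0)) atTop (𝓝 A) :=
    h.cesaro.congr fun n => by rw [Finset.sum_range_sub]
  have := hmean.add (tendsto_const_div_atTop_nhds_zero_nat (v 0))
  rw [add_zero] at this
  refine this.congr' ?_
  filter_upwards [eventually_ne_atTop 0] with n hn
  field_simp
  ring

theorem inv_pow_sub_inv_pow_eq {K : Type*} [Field K] {a b : K} (ha : a ≠ 0) (hb : b ≠ 0)
    (k : ℕ) :
    (b ^ k)⁻¹ - (a ^ k)⁻¹ =
      (a - b) / a ^ (k + 1) * ∑ i ∈ Finset.range k, (a / b) ^ (i + 1) := by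
  have hgeom := geom_sum_mul (a / b) k
  simp_rw [pow_succ _ _, ← Finset.sum_mul]
  calc (b ^ k)⁻¹ - (a ^ k)⁻¹ = ((a / b) ^ k - 1) / a ^ k := by rw [div_pow]; field_simp
    _ = _ := by rw [← hgeom]; field_simp

theorem tendsto_sub_div_pow_of_isBigO {h : ℝ → ℝ} {m : ℕ} {c : ℝ}
    (hexp : (fun x : ℝ => h x - x - c * x ^ m) =O[𝓝 0] fun x => x ^ (m + 1)) :
    Tendsto (fun y => (h y - y) / y ^ m) (𝓝[≠] 0) (𝓝 c) := by
  have hrem := (hexp.trans_isLittleO (isLittleO_pow_pow m.lt_succ_self)).tendsto_div_nhds_zero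
  have := (hrem.mono_left (nhdsWithin_le_nhds (s := {0}ᶜ))).add_const c
  rw [zero_add] at this
  refine this.congr' ?_
  filter_upwards [self_mem_nhdsWithin] with y (hy : y ≠ 0)
  field_simp
  ring

theorem tendsto_div_self_of_isBigO {h : ℝ → ℝ} {m : ℕ} {c : ℝ} (hm : 2 ≤ m)
    (hexp : (fun x : ℝ => h x - x - c * x ^ m) =O[𝓝 0] fun x => x ^ (m + 1)) :
    Tendsto (fun y => h y / y) (𝓝[≠] 0) (𝓝 1) := by
  obtain ⟨k, rfl⟩ : ∃ k, m = k + 1 := ⟨m - 1, by omega⟩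
  have hpow : Tendsto (fun y : ℝ => y ^ k) (𝓝[≠] 0) (𝓝 0) :=
    ((continuous_pow k).tendsto' 0 0 (zero_pow (by omega))).mono_left nhdsWithin_le_nhds
  have := (hpow.mul (tendsto_sub_div_pow_of_isBigO hexp)).const_add 1
  rw [zero_mul, add_zero] at this
  refine this.congr' ?_
  filter_upwards [self_mem_nhdsWithin] with y (hy : y ≠ 0)
  field_simp
  ring

theorem exists_forall_Ioo_pos_and_le_sub {f : ℝ → ℝ} {m : ℕ} {c : ℝ} (hc : c < 0)
    (hq : Tendsto (fun y => (f y - y) / y ^ m) (𝓝[>] 0) (𝓝 c))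
    (hr : Tendsto (fun y => f y / y) (𝓝[>] 0) (𝓝 1)) :
    ∃ ε > 0, ∀ y ∈ Ioo 0 ε, 0 < f y ∧ f y ≤ y - (-c / 2) * y ^ m := by
  have hev : ∀ᶠ y in 𝓝[>] 0, 0 < f y ∧ f y ≤ y - (-c / 2) * y ^ m := by
    filter_upwards [self_mem_nhdsWithin, hr.eventually (lt_mem_nhds one_pos),
      hq.eventually (gt_mem_nhds (by linarith : c < c / 2))] with y (hy : 0 < y) hpos hle
    rw [div_lt_iff₀ (pow_pos hy m)] at hle
    exact ⟨(div_pos_iff_of_pos_right hy).1 hpos, by linarith⟩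
  obtain ⟨ε, hε, hsub⟩ := mem_nhdsGT_iff_exists_Ioo_subset.1 hev
  exact ⟨ε, hε, fun y hy => hsub hy⟩

theorem tendsto_iterate_nhdsGT_zero {f : ℝ → ℝ} {ε d : ℝ} {m : ℕ} (hd : 0 < d)
    (hf : ∀ y ∈ Ioo 0 ε, 0 < f y ∧ f y ≤ y - d * y ^ m) {x : ℝ} (hx : x ∈ Ioo 0 ε) :
    Tendsto (fun n => f^[n] x) atTop (𝓝[>] 0) := by
  have hdec : ∀ y ∈ Ioo 0 ε, f y < y := fun y hy => by
    linarith [(hf y hy).2, mul_pos hd (pow_pos hy.1 m)]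
  have hmaps : MapsTo f (Ioo 0 ε) (Ioo 0 ε) := fun y hy =>
    ⟨(hf y hy).1, (hdec y hy).trans hy.2⟩
  have hmem : ∀ n, f^[n] x ∈ Ioo 0 ε := fun n => hmaps.iterate n hx
  have hstep : ∀ n, f^[n + 1] x ≤ f^[n] x - d * (f^[n] x) ^ m := fun n => by
    rw [Function.iterate_succ_apply']
    exact (hf _ (hmem n)).2
  have hanti : Antitone fun n => f^[n] x := antitone_nat_of_succ_le fun n => by
    rw [Function.iterate_succ_apply']
    exact (hdec _ (hmem n)).le
  have hbdd : BddBelow (range fun n => f^[n] x) :=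
    ⟨0, by rintro _ ⟨n, rfl⟩; exact (hmem n).1.le⟩
  have hL := tendsto_atTop_ciInf hanti hbdd
  set L := ⨅ n, f^[n] x
  have hL0 : 0 ≤ L := le_ciInf fun n => (hmem n).1.le
  have hdL : d * L ^ m ≤ 0 := by
    have hgap := hL.sub (hL.comp (tendsto_add_atTop_nat 1))
    rw [sub_self] at hgap
    exact le_of_tendsto_of_tendsto' ((hL.pow m).const_mul d) hgap fun n => by
      simp only [Function.comp_apply]
      linarith [hstep n]
  have hLz : L = 0 := eq_zero_of_pow_eq_zero (n := m) <|
    le_antisymm (nonpos_of_mul_nonpos_right hdL hd) (pow_nonneg hL0 m)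
  exact tendsto_nhdsWithin_iff.2 ⟨hLz ▸ hL, Eventually.of_forall fun n => (hmem n).1⟩

theorem tendsto_inv_pow_sub_inv_pow {f : ℝ → ℝ} {k : ℕ} {c : ℝ} {l : Filter ℝ}
    (hq : Tendsto (fun y => (f y - y) / y ^ (k + 1)) l (𝓝 c))
    (hr : Tendsto (fun y => f y / y) l (𝓝 1)) :
    Tendsto (fun y => (f y ^ k)⁻¹ - (y ^ k)⁻¹) l (𝓝 (-c * k)) := by
  have hr' : Tendsto (fun y => y / f y) l (𝓝 1) := by
    simpa only [inv_div, inv_one] using hr.inv₀ one_ne_zero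
  have hsum : Tendsto (fun y => ∑ i ∈ Finset.range k, (y / f y) ^ (i + 1)) l (𝓝 k) := by
    simpa using tendsto_finsetSum (Finset.range k) fun i _ => hr'.pow (i + 1)
  refine (hq.neg.mul hsum).congr' ?_
  filter_upwards [hr.eventually_ne one_ne_zero] with y hy
  obtain ⟨hfy, hy⟩ := div_ne_zero_iff.1 hy
  rw [inv_pow_sub_inv_pow_eq hy hfy, ← neg_div, neg_sub]

theorem tendsto_rpow_mul_of_tendsto_inv_pow_div {u : ℕ → ℝ} {k : ℕ} (hk : k ≠ 0) {A : ℝ}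
    (hA : 0 < A) (hu : ∀ᶠ n in atTop, 0 < u n)
    (h : Tendsto (fun n : ℕ => (u n ^ k)⁻¹ / n) atTop (𝓝 A)) :
    Tendsto (fun n : ℕ => (n : ℝ) ^ ((1 : ℝ) / k) * u n) atTop (𝓝 (A ^ (-(1 : ℝ) / k))) := by
  refine ((Real.continuousAt_rpow_const A _ (Or.inl hA.ne')).tendsto.comp h).congr' ?_
  filter_upwards [hu] with n hun
  rw [Function.comp_apply, div_eq_mul_inv, ← mul_inv, neg_div, Real.rpow_neg (by positivity),
    Real.inv_rpow (by positivity), inv_inv, Real.mul_rpow (by positivity) (by positivity),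
    one_div, Real.pow_rpow_inv_natCast hun.le hk, mul_comm]

theorem thron_limit_general (m : ℕ) (hm : 2 ≤ m) (c : ℝ) (hc : c < 0) (h : ℝ → ℝ)
    (hexp : (fun x : ℝ => h x - x - c * x ^ m) =O[𝓝 0] fun x : ℝ => x ^ (m + 1)) :
    ∃ ε > 0, ∀ x : ℝ, 0 < x → x < ε →
      Tendsto (fun n : ℕ => (n : ℝ) ^ ((1 : ℝ) / (m - 1)) * h^[n] x) atTop
        (𝓝 ((-c * ((m : ℝ) - 1)) ^ (-(1 : ℝ) / ((m : ℝ) - 1)))) := by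
  have hq := (tendsto_sub_div_pow_of_isBigO hexp).mono_left (nhdsGT_le_nhdsNE 0)
  have hr := (tendsto_div_self_of_isBigO hm hexp).mono_left (nhdsGT_le_nhdsNE 0)
  obtain ⟨ε, hε, hf⟩ := exists_forall_Ioo_pos_and_le_sub hc hq hr
  refine ⟨ε, hε, fun x hx0 hxε => ?_⟩
  have horbit := tendsto_iterate_nhdsGT_zero (by linarith) hf ⟨hx0, hxε⟩
  obtain ⟨k, rfl⟩ : ∃ k, m = k + 1 := ⟨m - 1, by omega⟩
  have hdiff : Tendsto (fun n => ((h^[n + 1] x) ^ k)⁻¹ - ((h^[n] x) ^ k)⁻¹) atTop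
      (𝓝 (-c * k)) :=
    ((tendsto_inv_pow_sub_inv_pow hq hr).comp horbit).congr fun n => by
      rw [Function.comp_apply, Function.iterate_succ_apply']
  have hA : 0 < -c * k := mul_pos (neg_pos.2 hc) (Nat.cast_pos.2 (by omega))
  simpa only [Nat.cast_add, Nat.cast_one, add_sub_cancel_right] using
    tendsto_rpow_mul_of_tendsto_inv_pow_div (by omega) hA
      (horbit.eventually eventually_mem_nhdsWithin) (tendsto_div_natCast_of_tendsto_sub hdiff)

/-- Thron's theorem: if `h` is analytic at `0` with `h x = x + c·x^m + O(x^{m+1})`,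
`c < 0`, `m ≥ 2`, then for `x > 0` sufficiently small,
`n^{1/(m-1)} · h^[n](x) → (-c (m-1))^{-1/(m-1)}` as `n → ∞`. -/
theorem thron_limit (m : ℕ) (hm : 2 ≤ m) (c : ℝ) (hc : c < 0) (h : ℝ → ℝ)
    (hanal : AnalyticAt ℝ h 0)
    (hexp : (fun x : ℝ => h x - x - c * x ^ m) =O[𝓝 0] fun x : ℝ => x ^ (m + 1)) :
    ∃ ε > 0, ∀ x : ℝ, 0 < x → x < ε →
      Tendsto (fun n : ℕ => (n : ℝ) ^ ((1 : ℝ) / (m - 1)) * h^[n] x) atTop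
        (𝓝 ((-c * ((m : ℝ) - 1)) ^ (-(1 : ℝ) / ((m : ℝ) - 1)))) :=
  thron_limit_general m hm c hc h hexp
end

section
/- For g(x) = 1 − e^{−x}, with expansion x − x²/2 + O(x³), one has lim_{n→∞} n·g^{[n]}(x) = 2 for all x > 0. -/
open Filter Topology

private lemma g_pos {y : ℝ} (hy : 0 < y) : 0 < 1 - Real.exp (-y) := by
  have : Real.exp (-y) < 1 := Real.exp_lt_one_iff.2 (by linarith)
  linarith

private lemma g_lt {y : ℝ} (hy : 0 < y) : 1 - Real.exp (-y) < y := by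
  have := Real.add_one_lt_exp (x := -y) (by linarith)
  linarith

/-- limit of (exp(-y)-1+y)/y^2 as y → 0+ is 1/2 -/
private lemma tendsto_A :
    Tendsto (fun y : ℝ => (Real.exp (-y) - 1 + y) / y ^ 2) (𝓝[>] (0:ℝ)) (𝓝 (1/2)) := by
  have key : ∀ y : ℝ, y ∈ Set.Ioo (0:ℝ) 1 →
      |(Real.exp (-y) - 1 + y) / y ^ 2 - 1/2| ≤ (2/9) * y := by
    intro y hy
    obtain ⟨hy0, hy1⟩ := hy
    have hb := Real.exp_bound (x := -y) (by rw [abs_neg, abs_of_pos hy0]; linarith) (n := 3)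
      (by norm_num)
    have hsum : ∑ m ∈ Finset.range 3, (-y) ^ m / (m.factorial : ℝ) = 1 - y + y^2/2 := by
      simp [Finset.sum_range_succ, Nat.factorial]; ring
    rw [hsum] at hb
    have habs : |(-y)| = y := by rw [abs_neg, abs_of_pos hy0]
    rw [habs] at hb
    have h2 : |Real.exp (-y) - 1 + y - y^2/2| ≤ (2/9) * y^3 := by
      have : (3:ℕ).succ / ((3:ℕ).factorial * (3:ℕ) : ℝ) = 2/9 := by
        norm_num [Nat.factorial]
      calc |Real.exp (-y) - 1 + y - y^2/2| = |Real.exp (-y) - (1 - y + y^2/2)| := by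
            ring_nf
          _ ≤ y ^ 3 * ((3:ℕ).succ / ((3:ℕ).factorial * (3:ℕ))) := hb
          _ = (2/9) * y^3 := by rw [this]; ring
    have hy2 : (0:ℝ) < y ^ 2 := by positivity
    have : (Real.exp (-y) - 1 + y) / y ^ 2 - 1/2
        = (Real.exp (-y) - 1 + y - y^2/2) / y^2 := by
      field_simp
    rw [this, abs_div, abs_of_pos hy2, div_le_iff₀ hy2]
    calc |Real.exp (-y) - 1 + y - y^2/2| ≤ (2/9) * y^3 := h2
      _ = 2/9 * y * y^2 := by ring
  have h1 : Tendsto (fun y : ℝ => (2/9) * y) (𝓝[>] (0:ℝ)) (𝓝 0) := by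
    have : Tendsto (fun y : ℝ => (2/9) * y) (𝓝 (0:ℝ)) (𝓝 ((2/9) * 0)) :=
      (tendsto_id.const_mul _)
    simpa using this.mono_left nhdsWithin_le_nhds
  have h0 : Tendsto (fun y : ℝ => (Real.exp (-y) - 1 + y) / y ^ 2 - 1/2) (𝓝[>] (0:ℝ)) (𝓝 0) := by
    apply squeeze_zero_norm' _ h1
    filter_upwards [Ioo_mem_nhdsGT_of_mem (by norm_num : (0:ℝ) ∈ Set.Ico 0 1)] with y hy
    exact key y hy
  have := h0.add_const (1/2)
  simpa using this

private lemma tendsto_B :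
    Tendsto (fun y : ℝ => y / (1 - Real.exp (-y))) (𝓝[>] (0:ℝ)) (𝓝 1) := by
  have hd : HasDerivAt (fun y : ℝ => 1 - Real.exp (-y)) 1 0 := by
    have h1 : HasDerivAt (fun y : ℝ => Real.exp (-y)) (-1) 0 := by
      have := (Real.hasDerivAt_exp (-0)).comp 0 (hasDerivAt_neg (0:ℝ))
      simpa [Function.comp_def] using this
    simpa [Pi.sub_def] using (hasDerivAt_const (0:ℝ) (1:ℝ)).sub h1
  have hs := hasDerivAt_iff_tendsto_slope.1 hd
  have hs' : Tendsto (fun y : ℝ => (1 - Real.exp (-y)) / y) (𝓝[>] (0:ℝ)) (𝓝 1) := by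
    have := hs.mono_left (nhdsWithin_mono 0 (by intro y hy; exact ne_of_gt hy))
    apply this.congr'
    filter_upwards [self_mem_nhdsWithin] with y hy
    simp [slope_def_field, div_eq_iff (ne_of_gt (show (0:ℝ) < y from hy))]
  have := hs'.inv₀ (by norm_num)
  simpa using this

private lemma tendsto_phi :
    Tendsto (fun y : ℝ => 1 / (1 - Real.exp (-y)) - 1 / y) (𝓝[>] (0:ℝ)) (𝓝 (1/2)) := by
  have hAB := tendsto_A.mul tendsto_B
  rw [show (1/2 : ℝ) * 1 = 1/2 by norm_num] at hAB
  apply hAB.congr'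
  filter_upwards [self_mem_nhdsWithin] with y hy
  have hy0 : (0:ℝ) < y := hy
  have hg := g_pos hy0
  field_simp
  ring

/-- For `g x = 1 - exp (-x)` (the case `m = 2`, `h_m = -1/2` of Thron's theorem),
`n · g^[n](x) → 2` for every `x > 0`. -/
theorem thron_limit_for_one_sub_exp_neg :
    ∀ x : ℝ, 0 < x →
      Tendsto (fun n : ℕ => (n : ℝ) * (fun y : ℝ => 1 - Real.exp (-y))^[n] x) atTop
        (𝓝 2) := by
  intro x hx
  set g : ℝ → ℝ := fun y => 1 - Real.exp (-y) with hg
  set u : ℕ → ℝ := fun n => g^[n] x with hu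
  have husucc : ∀ n, u (n + 1) = g (u n) := by
    intro n; simp [hu, Function.iterate_succ_apply']
  have hpos : ∀ n, 0 < u n := by
    intro n; induction n with
    | zero => simpa [hu] using hx
    | succ n ih => rw [husucc]; exact g_pos ih
  have hanti : ∀ n, u (n + 1) < u n := by
    intro n; rw [husucc]; exact g_lt (hpos n)
  -- u converges to its infimum L
  have hA : Antitone u := antitone_nat_of_succ_le fun n => (hanti n).le
  have hbdd : BddBelow (Set.range u) := ⟨0, by rintro _ ⟨n, rfl⟩; exact (hpos n).le⟩
  set L : ℝ := ⨅ n, u n with hL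
  have htend : Tendsto u atTop (𝓝 L) := tendsto_atTop_ciInf hA hbdd
  have hL0 : 0 ≤ L := le_ciInf fun n => (hpos n).le
  have hgc : Continuous g := by
    simpa [hg, Function.comp_def, Pi.sub_def] using continuous_const.sub (Real.continuous_exp.comp continuous_neg)
  have hgL : g L = L := by
    have h1 : Tendsto (fun n => u (n + 1)) atTop (𝓝 L) :=
      htend.comp (tendsto_add_atTop_nat 1)
    have h2 : Tendsto (fun n => g (u n)) atTop (𝓝 (g L)) :=
      (hgc.tendsto L).comp htend
    have : Tendsto (fun n => u (n + 1)) atTop (𝓝 (g L)) := by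
      simpa [husucc] using h2
    exact tendsto_nhds_unique this h1
  have hLzero : L = 0 := by
    by_contra h
    have hLpos : 0 < L := lt_of_le_of_ne hL0 (Ne.symm h)
    have h1 := g_lt hLpos
    have h2 : (1:ℝ) - Real.exp (-L) = L := hgL
    linarith
  rw [hLzero] at htend
  have htend' : Tendsto u atTop (𝓝[>] (0:ℝ)) :=
    tendsto_nhdsWithin_of_tendsto_nhds_of_eventually_within u htend
      (Eventually.of_forall fun n => hpos n)
  -- differences
  have hd : Tendsto (fun n => 1 / u (n + 1) - 1 / u n) atTop (𝓝 (1/2)) := by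
    have := tendsto_phi.comp htend'
    apply this.congr
    intro n
    simp only [Function.comp_apply, husucc, hg]
  -- Cesàro
  have hces := hd.cesaro
  have htel : ∀ n, ∑ i ∈ Finset.range n, (1 / u (i + 1) - 1 / u i) = 1 / u n - 1 / x := by
    intro n
    rw [Finset.sum_range_sub (fun i => 1 / u i)]
    simp [hu]
  have hinv : Tendsto (fun n : ℕ => (n:ℝ)⁻¹ * (1 / u n)) atTop (𝓝 (1/2)) := by
    have h1 : Tendsto (fun n : ℕ => (n:ℝ)⁻¹ * (1 / x)) atTop (𝓝 0) := by
      simpa using ((tendsto_inv_atTop_nhds_zero_nat (𝕜 := ℝ)).mul_const (1/x))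
    have h2 : Tendsto (fun n : ℕ => (n:ℝ)⁻¹ * (1 / u n - 1 / x) + (n:ℝ)⁻¹ * (1/x))
        atTop (𝓝 (1/2 + 0)) := by
      refine Tendsto.add ?_ h1
      apply hces.congr
      intro n
      rw [htel n]
    simp only [add_zero] at h2
    apply h2.congr
    intro n; ring
  -- conclude
  have hfin := hinv.inv₀ (by norm_num)
  rw [show ((1:ℝ)/2)⁻¹ = 2 by norm_num] at hfin
  apply hfin.congr'
  filter_upwards [Ici_mem_atTop 1] with n hn
  have hn0 : (0:ℝ) < n := by exact_mod_cast Nat.lt_of_lt_of_le Nat.zero_lt_one hn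
  have hun := hpos n
  rw [mul_inv, inv_inv, one_div, inv_inv]
end

section
/- The function α defined by α(x) = lim_{n→∞}( −(1/3)log n + 2/g^{[n]}(x) − n ) for x > 0, where g(x) = 1 − e^{−x}, satisfies the Abel equation α(g(x)) = α(x) + 1 for all x > 0. -/
open Filter Topology

theorem eq_add_of_tendsto_iterate_sub {X : Type*} (g : X → X) (h : X → ℝ) {φ : ℕ → ℝ} {c : ℝ}
    (hφ : Tendsto (fun n => φ (n + 1) - φ n) atTop (𝓝 c)) {x : X} {a b : ℝ}
    (hx : Tendsto (fun n => h (g^[n] x) - φ n) atTop (𝓝 a))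
    (hgx : Tendsto (fun n => h (g^[n] (g x)) - φ n) atTop (𝓝 b)) :
    b = a + c := by
  have hshift : Tendsto (fun n => h (g^[n + 1] x) - φ (n + 1) + (φ (n + 1) - φ n)) atTop
      (𝓝 (a + c)) :=
    (hx.comp (tendsto_add_atTop_nat 1)).add hφ
  refine tendsto_nhds_unique hgx (hshift.congr fun n => ?_)
  rw [Function.iterate_succ_apply]
  ring

/-- The function `α` defined by Fatou/Walker's limit formula
`α(x) = lim_{n→∞} ( -(1/3) log n + 2 / g^[n](x) - n )`, where `g x = 1 - exp (-x)`,
satisfies the Abel equation `α (g x) = α x + 1` for all `x > 0`. -/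
theorem fatou_walker_abel_equation (α : ℝ → ℝ)
    (hα : ∀ x : ℝ, 0 < x →
      Tendsto (fun n : ℕ =>
          -(1/3) * Real.log n + 2 / (fun y : ℝ => 1 - Real.exp (-y))^[n] x - n) atTop
        (𝓝 (α x))) :
    ∀ x : ℝ, 0 < x → α (1 - Real.exp (-x)) = α x + 1 := by
  intro x hx
  have hgx : 0 < 1 - Real.exp (-x) := sub_pos.2 (Real.exp_lt_one_iff.2 (neg_neg_of_pos hx))
  have hφ : Tendsto (fun n : ℕ => (1/3 * Real.log ↑(n + 1) + ↑(n + 1)) - (1/3 * Real.log n + n))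
      atTop (𝓝 1) := by
    have h := (Real.tendsto_log_nat_add_one_sub_log.const_mul (1/3)).add_const 1
    rw [mul_zero, zero_add] at h
    refine h.congr fun n => ?_
    push_cast
    ring
  exact eq_add_of_tendsto_iterate_sub (fun y => 1 - Real.exp (-y)) (fun y => 2 / y)
    (φ := fun n : ℕ => 1/3 * Real.log n + n) hφ
    ((hα x hx).congr fun n => by ring) ((hα _ hgx).congr fun n => by ring)
end

section
/- The formal power series identity Σ_{n=0}^{N−1} binom(t,n) Σ_{m=0}^{n} binom(n,m) (−1)^{n−m} a_m = Σ_{m=0}^{N−1} (−1)^{N−1−m} binom(t,m) binom(t−1−m, N−1−m) a_m holds for any sequence (a_m) and any t, as an identity of polynomials in t. -/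
/-- The generalized binomial coefficient `binom (t, n) = t (t-1) ⋯ (t-n+1) / n!` for `t` in a
commutative `ℚ`-algebra. -/
noncomputable def genBinom {R : Type*} [CommRing R] [Algebra ℚ R] (t : R) (n : ℕ) : R :=
  ((Nat.factorial n : ℚ))⁻¹ • ∏ i ∈ Finset.range n, (t - (i : R))

section Aux

variable {R : Type*} [CommRing R] [Algebra ℚ R]

lemma genBinom_zero (t : R) : genBinom t 0 = 1 := by
  simp [genBinom]

/-- Pascal's rule: binom(t, n+1) = binom(t-1, n+1) + binom(t-1, n). -/
lemma genBinom_pascal (t : R) (n : ℕ) :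
    genBinom t (n + 1) = genBinom (t - 1) (n + 1) + genBinom (t - 1) n := by
  have h1 : ∏ i ∈ Finset.range (n + 1), (t - (i : R))
      = (∏ i ∈ Finset.range n, ((t - 1) - (i : R))) * t := by
    rw [Finset.prod_range_succ']
    congr 1
    · apply Finset.prod_congr rfl
      intro i _
      push_cast; ring
    · simp
  have h2 : ∏ i ∈ Finset.range (n + 1), ((t - 1) - (i : R))
      = (∏ i ∈ Finset.range n, ((t - 1) - (i : R))) * ((t - 1) - n) := Finset.prod_range_succ _ _
  have key : genBinom t (n + 1) - genBinom (t - 1) (n + 1)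
      = genBinom (t - 1) n := by
    unfold genBinom
    rw [h1, h2, ← smul_sub, ← mul_sub]
    have : t - (t - 1 - (n : R)) = ((n + 1 : ℕ) : R) := by push_cast; ring
    rw [this]
    have hcast : ((n + 1 : ℕ) : R) = algebraMap ℚ R ((n + 1 : ℕ) : ℚ) := by
      simp
    rw [hcast, mul_comm, ← Algebra.smul_def, smul_smul]
    congr 1
    rw [Nat.factorial_succ]
    push_cast
    rw [mul_inv]
    field_simp
  linear_combination (norm := module) key

/-- Splitting: C(m+k, m) * binom(t, m+k) = binom(t,m) * binom(t-m, k). -/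
lemma genBinom_split (t : R) (m k : ℕ) :
    (((m + k).choose m : ℚ)) • genBinom t (m + k)
      = genBinom t m * genBinom (t - (m : R)) k := by
  unfold genBinom
  rw [Finset.prod_range_add]
  have hre : ∀ i ∈ Finset.range k, (t - ((m + i : ℕ) : R)) = (t - (m:R)) - (i : R) := by
    intro i _; push_cast; ring
  rw [Finset.prod_congr rfl hre]
  rw [smul_smul, smul_mul_smul_comm]
  congr 1
  have h := Nat.choose_mul_factorial_mul_factorial (Nat.le_add_right m k)
  have h2 : (m + k) - m = k := by omega
  rw [h2] at h
  have hq : ((m+k).choose m : ℚ) * ((m : ℕ).factorial : ℚ) * ((k : ℕ).factorial : ℚ)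
      = (((m+k).factorial : ℕ) : ℚ) := by exact_mod_cast congrArg (Nat.cast : ℕ → ℚ) h
  have hm : ((m : ℕ).factorial : ℚ) ≠ 0 := Nat.cast_ne_zero.mpr (Nat.factorial_ne_zero m)
  have hk : ((k : ℕ).factorial : ℚ) ≠ 0 := Nat.cast_ne_zero.mpr (Nat.factorial_ne_zero k)
  have hmk : (((m+k).factorial : ℕ) : ℚ) ≠ 0 := Nat.cast_ne_zero.mpr (Nat.factorial_ne_zero _)
  field_simp
  linarith [hq]

/-- Alternating sum: ∑_{k ≤ K} (-1)^k binom(s,k) = (-1)^K binom(s-1, K). -/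
lemma genBinom_alt_sum (s : R) (K : ℕ) :
    ∑ k ∈ Finset.range (K + 1), (-1 : R) ^ k * genBinom s k
      = (-1 : R) ^ K * genBinom (s - 1) K := by
  induction K with
  | zero => simp [genBinom_zero]
  | succ K ih =>
    rw [Finset.sum_range_succ, ih, genBinom_pascal s K]
    ring

lemma jab_scalar (t : R) {m N : ℕ} (h : m < N) :
    ∑ n ∈ Finset.Ico m N, (-1 : R) ^ (n - m) * (n.choose m : R) * genBinom t n
      = (-1 : R) ^ (N - 1 - m) * (genBinom t m * genBinom (t - 1 - (m : R)) (N - 1 - m)) := by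
  rw [Finset.sum_Ico_eq_sum_range]
  have hsub : ∀ k, (m + k) - m = k := fun k => by omega
  have hterm : ∀ k, (-1 : R) ^ ((m + k) - m) * ((m + k).choose m : R) * genBinom t (m + k)
      = genBinom t m * ((-1 : R) ^ k * genBinom (t - (m : R)) k) := by
    intro k
    rw [hsub]
    have hc : ((m + k).choose m : R) * genBinom t (m + k)
        = genBinom t m * genBinom (t - (m : R)) k := by
      rw [← genBinom_split t m k, Algebra.smul_def, map_natCast]
    calc (-1 : R) ^ k * ((m + k).choose m : R) * genBinom t (m + k)
        = (-1 : R) ^ k * (((m + k).choose m : R) * genBinom t (m + k)) := by ring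
      _ = (-1 : R) ^ k * (genBinom t m * genBinom (t - (m : R)) k) := by rw [hc]
      _ = _ := by ring
  rw [Finset.sum_congr rfl (fun k _ => hterm k), ← Finset.mul_sum]
  have hNm : N - m = (N - 1 - m) + 1 := by omega
  rw [hNm, genBinom_alt_sum]
  have : t - (m : R) - 1 = t - 1 - (m : R) := by ring
  rw [this]
  ring

end Aux

/-- Jabotinsky's identity: for any sequence `(a_m)` in an `R`-module and any `t` in a
commutative `ℚ`-algebra `R`,
`∑_{n<N} binom(t,n) ∑_{m≤n} binom(n,m) (-1)^{n-m} a_m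
  = ∑_{m<N} (-1)^{N-1-m} binom(t,m) binom(t-1-m, N-1-m) a_m`. -/
theorem jabotinsky_identity {R M : Type*} [CommRing R] [Algebra ℚ R]
    [AddCommGroup M] [Module R M] (a : ℕ → M) (t : R) (N : ℕ) :
    ∑ n ∈ Finset.range N, genBinom t n •
        ∑ m ∈ Finset.range (n + 1), (((-1 : ℤ) ^ (n - m) * (n.choose m : ℤ)) • a m)
      = ∑ m ∈ Finset.range N,
          ((-1 : ℤ) ^ (N - 1 - m)) •
            (genBinom t m • genBinom (t - 1 - (m : R)) (N - 1 - m) • a m) := by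
  have step1 : ∀ n, genBinom t n •
        ∑ m ∈ Finset.range (n + 1), (((-1 : ℤ) ^ (n - m) * (n.choose m : ℤ)) • a m)
      = ∑ m ∈ Finset.range (n + 1),
          ((-1 : R) ^ (n - m) * (n.choose m : R) * genBinom t n) • a m := by
    intro n
    rw [Finset.smul_sum]
    refine Finset.sum_congr rfl fun m _ => ?_
    rw [← Int.cast_smul_eq_zsmul R, smul_comm, ← smul_assoc]
    congr 1
    push_cast
    simp [smul_eq_mul]
  rw [Finset.sum_congr rfl fun n _ => step1 n]
  have hswap : ∑ n ∈ Finset.range N, ∑ m ∈ Finset.range (n + 1),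
        ((-1 : R) ^ (n - m) * (n.choose m : R) * genBinom t n) • a m
      = ∑ m ∈ Finset.range N, ∑ n ∈ Finset.Ico m N,
        ((-1 : R) ^ (n - m) * (n.choose m : R) * genBinom t n) • a m := by
    simp only [← Nat.Ico_zero_eq_range]
    exact (Finset.sum_Ico_Ico_comm 0 N
        (fun m n => ((-1 : R) ^ (n - m) * (n.choose m : R) * genBinom t n) • a m)).symm
  rw [hswap]
  refine Finset.sum_congr rfl fun m hm => ?_
  rw [Finset.mem_range] at hm
  rw [← Finset.sum_smul, jab_scalar t hm, ← Int.cast_smul_eq_zsmul R]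
  rw [mul_smul]
  congr 1
  · push_cast; ring
  · rw [smul_smul]
end
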